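/- arXiv:cs/0505023 — 2 statements merged into one kernel-verified Lean document; each statement's English description precedes it below -/
import Mathlib

section
/- The relation R between TPN states and Marking Timed Automaton states (equal marking and equal clock valuation) is preserved by discrete transitions in both directions: (M,v) can fire t_i to (M',v') in the TPN iff (l,v̄) with M(l)=M, v̄=v can take the corresponding edge labeled t_i to (l',v̄') with M(l')=M' and v̄'=v'. Hence R is a timed bisimulation. -/
open scoped ENNReal NNReal
noncomputable section
open Classical

def Enables {P T : Type*} (pre : T → P → ℕ) (M : P → ℕ) (t : T) : Prop :=
  ∀ p, pre t p ≤ M p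

def NewlyEnabled {P T : Type*} (pre post : T → P → ℕ) (M : P → ℕ) (ti tk : T) : Prop :=
  Enables pre (fun p => M p - pre ti p + post ti p) tk ∧
    ¬ Enables pre (fun p => M p - pre ti p) tk

/-- TPN discrete transition `(M,v) →^{t_i} (M',v')`. -/
def TPNFire {P T : Type*} (pre post : T → P → ℕ) (α : T → ℝ≥0) (β : T → ℝ≥0∞)
    (M : P → ℕ) (v : T → ℝ≥0) (ti : T) (M' : P → ℕ) (v' : T → ℝ≥0) : Prop :=
  Enables pre M ti ∧
  M' = (fun p => M p - pre ti p + post ti p) ∧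
  α ti ≤ v ti ∧ ((v ti : ℝ≥0) : ℝ≥0∞) ≤ β ti ∧
  ∀ tk, v' tk = if NewlyEnabled pre post M ti tk then 0 else v tk

/-- Invariant of the location of the Marking Timed Automaton associated with `M`. -/
def Invariant {P T : Type*} (pre : T → P → ℕ) (β : T → ℝ≥0∞) (M : P → ℕ)
    (u : T → ℝ≥0) : Prop :=
  ∀ t, Enables pre M t → ((u t : ℝ≥0) : ℝ≥0∞) ≤ β t

/-- Discrete step of the Marking Timed Automaton (locations are reachable
markings, one edge per firable transition, guard `x_i ≥ α(t_i)`, reset of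
newly enabled clocks, target invariant must hold). -/
def TAFire {P T : Type*} (pre post : T → P → ℕ) (α : T → ℝ≥0) (β : T → ℝ≥0∞)
    (M : P → ℕ) (u : T → ℝ≥0) (ti : T) (M' : P → ℕ) (u' : T → ℝ≥0) : Prop :=
  Enables pre M ti ∧
  M' = (fun p => M p - pre ti p + post ti p) ∧
  α ti ≤ u ti ∧
  u' = (fun tk => if NewlyEnabled pre post M ti tk then 0 else u tk) ∧
  Invariant pre β M' u'

/-- The relation "same marking, same clock valuation" is preserved by discrete
transitions in both directions: for states satisfying the source invariant,
the TPN can fire `t_i` iff the Marking Timed Automaton can take the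
corresponding edge, with equal resulting markings and valuations.  Hence the
relation is a timed bisimulation for discrete steps. -/
theorem discrete_bisimulation {P T : Type*} (pre post : T → P → ℕ)
    (α : T → ℝ≥0) (β : T → ℝ≥0∞) (M : P → ℕ) (v : T → ℝ≥0) (ti : T)
    (M' : P → ℕ) (v' : T → ℝ≥0)
    (hinv : Invariant pre β M v) :
    TPNFire pre post α β M v ti M' v' ↔ TAFire pre post α β M v ti M' v' := by
  constructor
  · rintro ⟨hen, hM', hα, hβ, hv'⟩
    refine ⟨hen, hM', hα, funext hv', ?_⟩
    intro t ht
    rw [hv' t]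
    by_cases hne : NewlyEnabled pre post M ti t
    · simp [hne]
    · simp only [if_neg hne]
      apply hinv t
      have hen' : Enables pre (fun p => M p - pre ti p + post ti p) t := by
        rwa [hM'] at ht
      have hmid : Enables pre (fun p => M p - pre ti p) t := by
        by_contra h
        exact hne ⟨hen', h⟩
      intro p
      exact (hmid p).trans (Nat.sub_le _ _)
  · rintro ⟨hen, hM', hα, hv', hinv'⟩
    refine ⟨hen, hM', hα, hinv ti hen, fun tk => ?_⟩
    rw [hv']
end
end

section
/- If (l,v̄) satisfies Inv(l) and edge e = (l, x_i ≥ α_i, t_i, R, l') is taken with the guard satisfied, then the resulting valuation v̄' = v̄[R ← 0] satisfies Inv(l'), where Inv(l') consists of constraints x_j ≤ β_j for transitions t_j enabled by M(l'), and R contains exactly the clocks of newly enabled transitions (which have β_j ≥ 0), while all other enabled t_j in M(l') were already enabled in M(l). -/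
open scoped ENNReal NNReal
noncomputable section
open Classical

/-- Taking an edge of the Marking Timed Automaton preserves invariants:
if `v̄` satisfies `Inv(M)` and the edge for `t_i` (guard `x_i ≥ α_i`) is taken,
then `v̄[R ← 0]` (resetting exactly the newly enabled clocks) satisfies `Inv(M')`. -/
theorem invariant_preserved_by_edge {P T : Type*} (pre post : T → P → ℕ)
    (α : T → ℝ≥0) (β : T → ℝ≥0∞) (M M' : P → ℕ) (ti : T) (vbar vbar' : T → ℝ≥0)
    (hinv : Invariant pre β M vbar)
    (henabled : Enables pre M ti)
    (hguard : α ti ≤ vbar ti)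
    (hM' : M' = fun p => M p - pre ti p + post ti p)
    (hreset : vbar' = fun tk => if NewlyEnabled pre post M ti tk then 0 else vbar tk) :
    Invariant pre β M' vbar' := by
  subst hM' hreset
  intro t ht
  by_cases h : NewlyEnabled pre post M ti t
  · simp [h]
  · simp only [h, if_false]
    apply hinv
    intro p
    have h2 : Enables pre (fun p => M p - pre ti p) t := by
      rcases not_and_or.mp h with h' | h'
      · exact absurd ht h'
      · exact not_not.mp h'
    exact le_trans (h2 p) (Nat.sub_le _ _)
end
end
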